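/- arXiv:1409.8203 — 5 statements merged into one kernel-verified Lean document; each statement's English description precedes it below -/
import Mathlib

section
/- Let A, B, C be Banach algebras over 𝕂, let α : A → C and β : B → C be continuous surjective algebra homomorphisms, and let D, γ, δ be the pullback data. Suppose β has a right inverse which is a continuous algebra homomorphism. Then δ has a right inverse which is a continuous algebra homomorphism if and only if α has a right inverse which is a continuous algebra homomorphism. -/
/- The pullback of two continuous algebra homomorphisms `α : A → C` and `β : B → C`
between (possibly non-unital) Banach algebras, realised as a closed subalgebra of the
Banach-algebra direct sum `A × B` (whose norm is the maximum of the coordinate norms). -/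

variable {𝕜 : Type*} [RCLike 𝕜]
variable {A B C : Type*}
  [NonUnitalNormedRing A] [NormedSpace 𝕜 A] [IsScalarTower 𝕜 A A] [SMulCommClass 𝕜 A A]
  [CompleteSpace A]
  [NonUnitalNormedRing B] [NormedSpace 𝕜 B] [IsScalarTower 𝕜 B B] [SMulCommClass 𝕜 B B]
  [CompleteSpace B]
  [NonUnitalNormedRing C] [NormedSpace 𝕜 C] [IsScalarTower 𝕜 C C] [SMulCommClass 𝕜 C C]
  [CompleteSpace C]

/-- The pullback `D = {(a,b) ∈ A ⊕ B : α(a) = β(b)}`. -/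
def pullback (α : A →ₙₐ[𝕜] C) (β : B →ₙₐ[𝕜] C) : NonUnitalSubalgebra 𝕜 (A × B) where
  carrier := {p | α p.1 = β p.2}
  add_mem' := by intro p q hp hq; simp only [Set.mem_setOf_eq] at *; simp [map_add, hp, hq]
  zero_mem' := by simp
  mul_mem' := by intro p q hp hq; simp only [Set.mem_setOf_eq] at *; simp [map_mul, hp, hq]
  smul_mem' := by intro c p hp; simp only [Set.mem_setOf_eq] at *; simp [map_smul, hp]

/-!
Since `α ∘ γ = β ∘ δ` on the pullback (`γ = pullback.fst`, `δ = pullback.snd`), a splitting `τ`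
of `δ` and a splitting `ρ` of `β` give the splitting `γ ∘ τ ∘ ρ` of `α`. Conversely, a splitting
`σ` of `α` gives the splitting `b ↦ (σ (β b), b)` of `δ`.
-/

def SplitsStrongly {R X Y : Type*} [Monoid R] [NonUnitalNonAssocSemiring X]
    [DistribMulAction R X] [TopologicalSpace X] [NonUnitalNonAssocSemiring Y]
    [DistribMulAction R Y] [TopologicalSpace Y] (φ : X →ₙₐ[R] Y) : Prop :=
  ∃ ψ : Y →ₙₐ[R] X, Continuous ψ ∧ ∀ y, φ (ψ y) = y

namespace pullback

variable {E F G : Type*} [NonUnitalNormedRing E] [NormedSpace 𝕜 E] [NonUnitalNormedRing F]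
  [NormedSpace 𝕜 F] [NonUnitalNormedRing G] [NormedSpace 𝕜 G]
  (α : E →ₙₐ[𝕜] G) (β : F →ₙₐ[𝕜] G)

def fst : pullback α β →ₙₐ[𝕜] E :=
  (NonUnitalAlgHom.fst 𝕜 E F).comp (NonUnitalSubalgebraClass.subtype _)

def snd : pullback α β →ₙₐ[𝕜] F :=
  (NonUnitalAlgHom.snd 𝕜 E F).comp (NonUnitalSubalgebraClass.subtype _)

theorem continuous_fst : Continuous (fst α β) :=
  _root_.continuous_fst.comp continuous_subtype_val

theorem condition (p : pullback α β) : α (fst α β p) = β (snd α β p) :=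
  p.2

variable {α β} {H : Type*} [NonUnitalNonAssocSemiring H] [Module 𝕜 H]

def lift (f : H →ₙₐ[𝕜] E) (g : H →ₙₐ[𝕜] F) (h : ∀ x, α (f x) = β (g x)) :
    H →ₙₐ[𝕜] pullback α β :=
  NonUnitalAlgHom.codRestrict (f.prod g) (pullback α β) h

theorem continuous_lift [TopologicalSpace H] {f : H →ₙₐ[𝕜] E} {g : H →ₙₐ[𝕜] F}
    (hf : Continuous f) (hg : Continuous g) (h : ∀ x, α (f x) = β (g x)) :
    Continuous (lift f g h) :=
  (hf.prodMk hg).subtype_mk _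

theorem snd_lift (f : H →ₙₐ[𝕜] E) (g : H →ₙₐ[𝕜] F) (h : ∀ x, α (f x) = β (g x)) (x : H) :
    snd α β (lift f g h x) = g x :=
  rfl

end pullback

namespace SplitsStrongly

open pullback

variable {E F G : Type*} [NonUnitalNormedRing E] [NormedSpace 𝕜 E] [NonUnitalNormedRing F]
  [NormedSpace 𝕜 F] [NonUnitalNormedRing G] [NormedSpace 𝕜 G]
  {α : E →ₙₐ[𝕜] G} {β : F →ₙₐ[𝕜] G}

theorem of_pullback_snd (hβ : SplitsStrongly β) (hδ : SplitsStrongly (snd α β)) :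
    SplitsStrongly α := by
  obtain ⟨ρ, hρ_cont, hρ⟩ := hβ
  obtain ⟨τ, hτ_cont, hτ⟩ := hδ
  refine ⟨(fst α β).comp (τ.comp ρ), (continuous_fst α β).comp (hτ_cont.comp hρ_cont),
    fun c => ?_⟩
  calc α (fst α β (τ (ρ c))) = β (snd α β (τ (ρ c))) := condition α β _
    _ = c := by rw [hτ, hρ]

theorem pullback_snd (hβ : Continuous β) (hα : SplitsStrongly α) :
    SplitsStrongly (snd α β) :=
  let ⟨σ, hσ_cont, hσ⟩ := hα
  ⟨lift (σ.comp β) (NonUnitalAlgHom.id 𝕜 F) (fun b => hσ (β b)),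
    continuous_lift (hσ_cont.comp hβ :) continuous_id _, snd_lift _ _ _⟩

end SplitsStrongly

theorem pullback_splits_strongly_iff_general (α : A →ₙₐ[𝕜] C) (β : B →ₙₐ[𝕜] C)
    (hβ : Continuous β)
    (hβsplit : ∃ ρ : C →ₙₐ[𝕜] B, Continuous ρ ∧ ∀ c, β (ρ c) = c) :
    (∃ τ : B →ₙₐ[𝕜] pullback α β, Continuous τ ∧ ∀ b, ((τ b : A × B)).2 = b) ↔
    (∃ σ : C →ₙₐ[𝕜] A, Continuous σ ∧ ∀ c, α (σ c) = c) :=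
  ⟨SplitsStrongly.of_pullback_snd hβsplit, SplitsStrongly.pullback_snd hβ⟩

/-- Suppose `β` has a right inverse which is a continuous algebra homomorphism. Then the
restricted coordinate projection `δ : D → B, (a,b) ↦ b` has a right inverse which is a
continuous algebra homomorphism if and only if `α` does. -/
theorem pullback_splits_strongly_iff (α : A →ₙₐ[𝕜] C) (β : B →ₙₐ[𝕜] C)
    (hα : Continuous α) (hβ : Continuous β)
    (hαsurj : Function.Surjective α) (hβsurj : Function.Surjective β)
    (hβsplit : ∃ ρ : C →ₙₐ[𝕜] B, Continuous ρ ∧ ∀ c, β (ρ c) = c) :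
    (∃ τ : B →ₙₐ[𝕜] pullback α β, Continuous τ ∧ ∀ b, ((τ b : A × B)).2 = b) ↔
    (∃ σ : C →ₙₐ[𝕜] A, Continuous σ ∧ ∀ c, α (σ c) = c) :=
  pullback_splits_strongly_iff_general α β hβ hβsplit
end

section
/- Let q : ℓ¹(ℕ) → ℓ²(ℕ) be a bounded linear surjection. Equip ℓ¹(ℕ) and ℓ²(ℕ) with the trivial (zero) product, and let A = ℓ¹(ℕ)^~ and C = ℓ²(ℕ)^~ be their unitizations. Define α : A → C by α(x + λ1) = q(x) + λ1 for x ∈ ℓ¹(ℕ) and λ ∈ 𝕂. Then α is a continuous surjective algebra homomorphism with ker α = ker q, the extension 0 → ker α → A → C → 0 is singular, α has a right inverse which is an algebra homomorphism (so the extension splits algebraically), but α has no bounded linear right inverse (the extension is not admissible). -/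
/-!
The algebraic assertions hold for `TrivSqZeroExt.map f` of any linear map `f`: it sends
`x + λ1` to `f x + λ1`, its kernel consists of elements with zero scalar part, any two of which
multiply to zero, and a linear right inverse `g` of `f` yields the algebra right inverse `map g`.

A bounded linear right inverse of `map q` restricts to a bounded right inverse `s` of `q`, so
`‖s eₙ‖ ≥ 1 / ‖q‖` for the unit vectors `eₙ` of ℓ². This is impossible. The `eₙ` are weakly null,
so the `s eₙ` tend to zero coordinatewise. In ℓ¹, adding to a fixed vector `y` a far enough term
`xₙ` of a coordinatewise null sequence adds the norms up to `ε`: `‖y + xₙ‖ ≥ ‖y‖ + ‖xₙ‖ - ε`.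
Inductively one finds `K` indices with `‖s (∑ eₙ)‖ ≥ K / (2‖q‖)`, whereas `‖∑ eₙ‖ = √K`.
-/

namespace TrivSqZeroExt

section Map

variable {R M N : Type*} [CommSemiring R]
  [AddCommMonoid M] [Module R M] [Module Rᵐᵒᵖ M] [IsCentralScalar R M]
  [AddCommMonoid N] [Module R N] [Module Rᵐᵒᵖ N] [IsCentralScalar R N]

theorem map_eq_inl_add_inr (f : M →ₗ[R] N) (x : TrivSqZeroExt R M) :
    map f x = inl x.fst + inr (f x.snd) := by
  ext <;> simp

theorem map_eq_zero_iff (f : M →ₗ[R] N) (x : TrivSqZeroExt R M) :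
    map f x = 0 ↔ x.fst = 0 ∧ f x.snd = 0 := by
  simp [TrivSqZeroExt.ext_iff]

theorem map_surjective {f : M →ₗ[R] N} (hf : Function.Surjective f) :
    Function.Surjective (map f) := by
  intro y
  obtain ⟨x, hx⟩ := hf y.snd
  exact ⟨inl y.fst + inr x, by ext <;> simp [hx]⟩

theorem exists_rightInverse_map [Module.Projective R N] {f : M →ₗ[R] N}
    (hf : Function.Surjective f) :
    ∃ ρ : TrivSqZeroExt R N →ₐ[R] TrivSqZeroExt R M, ∀ y, map f (ρ y) = y := by
  obtain ⟨g, hg⟩ := f.exists_rightInverse_of_surjective (LinearMap.range_eq_top.2 hf)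
  refine ⟨map g, fun y => ?_⟩
  rw [← AlgHom.comp_apply, ← map_comp_map, hg, map_id, AlgHom.id_apply]

theorem continuous_map [TopologicalSpace R] [TopologicalSpace M] [TopologicalSpace N]
    {f : M →ₗ[R] N} (hf : Continuous f) : Continuous (map f) := by
  refine continuous_inf_rng.2 ⟨continuous_induced_rng.2 ?_, continuous_induced_rng.2 ?_⟩
  · simpa only [Function.comp_def, fst_map] using TrivSqZeroExt.continuous_fst
  · simpa only [Function.comp_def, snd_map] using hf.comp TrivSqZeroExt.continuous_snd

theorem rightInverse_sndCLM_comp_inrCLM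
    [TopologicalSpace R] [TopologicalSpace M] [TopologicalSpace N]
    {f : M →ₗ[R] N} {ρ : TrivSqZeroExt R N →L[R] TrivSqZeroExt R M} (hρ : ∀ y, map f (ρ y) = y)
    (y : N) : f ((sndCLM R M).comp (ρ.comp (inrCLM R N)) y) = y := by
  simpa using congrArg snd (hρ (inr y))

end Map

theorem mul_eq_zero_of_fst_eq_zero {R M : Type*} [Semiring R] [AddCommMonoid M] [Module R M]
    [Module Rᵐᵒᵖ M] {x y : TrivSqZeroExt R M} (hx : x.fst = 0) (hy : y.fst = 0) : x * y = 0 := by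
  ext <;> simp [hx, hy]

end TrivSqZeroExt

namespace lp

open Filter Topology

variable {α : Type*}

section Norm

variable {E : α → Type*} [∀ i, NormedAddCommGroup (E i)]

theorem tendsto_norm_cofinite_zero {p : ENNReal} (hp : 0 < p.toReal) (f : lp E p) :
    Tendsto (fun i => ‖f i‖) cofinite (𝓝 0) := by
  have h := ((Real.continuousAt_rpow_const 0 p.toReal⁻¹ (.inr (inv_pos.2 hp).le)).tendsto).comp
    (hasSum_norm hp f).summable.tendsto_cofinite_zero
  simpa [Function.comp_def, Real.rpow_rpow_inv (norm_nonneg _) hp.ne', hp.ne'] using h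

theorem hasSum_norm_one (f : lp E 1) : HasSum (fun i => ‖f i‖) ‖f‖ := by
  simpa using hasSum_norm (p := 1) (by norm_num) f

theorem sum_norm_le_norm_one (f : lp E 1) (s : Finset α) : ∑ i ∈ s, ‖f i‖ ≤ ‖f‖ :=
  sum_le_hasSum s (fun _ _ => norm_nonneg _) (hasSum_norm_one f)

theorem exists_finset_norm_sub_lt_sum (f : lp E 1) {δ : ℝ} (hδ : 0 < δ) :
    ∃ s : Finset α, ‖f‖ - δ < ∑ i ∈ s, ‖f i‖ :=
  ((hasSum_norm_one f).eventually (lt_mem_nhds (sub_lt_self _ hδ))).exists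

theorem eventually_norm_add_sub_le_norm_add {ι : Type*} {l : Filter ι} {x : ι → lp E 1}
    (hx : ∀ i, Tendsto (fun n => x n i) l (𝓝 0)) (y : lp E 1) {ε : ℝ} (hε : 0 < ε) :
    ∀ᶠ n in l, ‖y‖ + ‖x n‖ - ε ≤ ‖y + x n‖ := by
  classical
  have hε5 : 0 < ε / 5 := by positivity
  obtain ⟨G, hyG⟩ := exists_finset_norm_sub_lt_sum y hε5
  have hxG : ∀ᶠ n in l, ∑ i ∈ G, ‖x n i‖ < ε / 5 := by
    have h : Tendsto (fun n => ∑ i ∈ G, ‖x n i‖) l (𝓝 0) := by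
      simpa using tendsto_finsetSum G fun i _ => (hx i).norm
    exact h.eventually (gt_mem_nhds hε5)
  filter_upwards [hxG] with n hxnG
  obtain ⟨H, hxnH⟩ := exists_finset_norm_sub_lt_sum (x n) hε5
  set T := H \ G
  have hGT : Disjoint G T := Finset.disjoint_sdiff
  have h_split : ∑ i ∈ G, ‖y i + x n i‖ + ∑ i ∈ T, ‖y i + x n i‖ ≤ ‖y + x n‖ := by
    rw [← Finset.sum_union hGT]
    exact sum_norm_le_norm_one (y + x n) _
  have h_onG : ∑ i ∈ G, ‖y i‖ - ∑ i ∈ G, ‖x n i‖ ≤ ∑ i ∈ G, ‖y i + x n i‖ := by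
    rw [← Finset.sum_sub_distrib]
    exact Finset.sum_le_sum fun i _ => by simpa using norm_sub_norm_le (y i) (-x n i)
  have h_onT : ∑ i ∈ T, ‖x n i‖ - ∑ i ∈ T, ‖y i‖ ≤ ∑ i ∈ T, ‖y i + x n i‖ := by
    rw [← Finset.sum_sub_distrib]
    exact Finset.sum_le_sum fun i _ => by
      simpa [add_comm] using norm_sub_norm_le (x n i) (-y i)
  have hy_tail : ∑ i ∈ G, ‖y i‖ + ∑ i ∈ T, ‖y i‖ ≤ ‖y‖ := by
    rw [← Finset.sum_union hGT]
    exact sum_norm_le_norm_one y _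
  have hxn_H : ∑ i ∈ H, ‖x n i‖ ≤ ∑ i ∈ G, ‖x n i‖ + ∑ i ∈ T, ‖x n i‖ := by
    rw [← Finset.sum_union hGT, Finset.union_sdiff_self_eq_union]
    exact Finset.sum_le_sum_of_subset_of_nonneg Finset.subset_union_right
      fun i _ _ => norm_nonneg _
  linarith

theorem exists_card_eq_sum_norm_sub_le_norm_sum {x : ℕ → lp E 1}
    (hx : ∀ i, Tendsto (fun n => x n i) atTop (𝓝 0)) {ε : ℝ} (hε : 0 < ε) (K : ℕ) :
    ∃ S : Finset ℕ, S.card = K ∧ ∑ n ∈ S, (‖x n‖ - ε) ≤ ‖∑ n ∈ S, x n‖ := by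
  induction K with
  | zero => exact ⟨∅, rfl, by simp⟩
  | succ K ih =>
    obtain ⟨S, hcard, hS⟩ := ih
    have hfresh : ∀ᶠ n in atTop, n ∉ S := Nat.cofinite_eq_atTop ▸ S.eventually_cofinite_notMem
    obtain ⟨n, hn, hnS⟩ :=
      ((eventually_norm_add_sub_le_norm_add hx (∑ n ∈ S, x n) hε).and hfresh).exists
    refine ⟨insert n S, by rw [Finset.card_insert_of_notMem hnS, hcard], ?_⟩
    rw [Finset.sum_insert hnS, Finset.sum_insert hnS, add_comm (x n)]
    linarith

end Norm

section Scalar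

variable {𝕜 : Type*} [DecidableEq α] [RCLike 𝕜]

theorem norm_sum_single_one_sq (s : Finset α) :
    ‖∑ i ∈ s, lp.single 2 i (1 : 𝕜)‖ ^ 2 = s.card := by
  have h := lp.norm_sum_single (E := fun _ : α => 𝕜) (p := 2) (by norm_num) (fun _ => 1) s
  simpa using h

theorem tendsto_dual_single_cofinite_zero (φ : StrongDual 𝕜 (lp (fun _ : α => 𝕜) 2)) :
    Tendsto (fun i => φ (lp.single 2 i 1)) cofinite (𝓝 0) := by
  set w := (InnerProductSpace.toDual 𝕜 _).symm φ
  have hφ : ∀ i, ‖φ (lp.single 2 i 1)‖ = ‖w i‖ := fun i => by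
    rw [← InnerProductSpace.toDual_symm_apply, inner_single_right]
    simp [w]
  rw [tendsto_zero_iff_norm_tendsto_zero]
  simpa only [hφ] using tendsto_norm_cofinite_zero (by norm_num) w

theorem tendsto_norm_apply_single_of_lpTwo_to_lpOne
    (s : lp (fun _ : ℕ => 𝕜) 2 →L[𝕜] lp (fun _ : ℕ => 𝕜) 1) :
    Tendsto (fun n => ‖s (lp.single 2 n 1)‖) atTop (𝓝 0) := by
  by_contra h
  obtain ⟨c, hc, hfreq⟩ : ∃ c > 0, ∃ᶠ n in atTop, c ≤ ‖s (lp.single 2 n 1)‖ := by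
    simpa [Metric.tendsto_nhds, not_eventually, frequently_atTop] using h
  obtain ⟨φ, hφ, hφc⟩ := extraction_of_frequently_atTop hfreq
  set x : ℕ → lp (fun _ : ℕ => 𝕜) 1 := fun k => s (lp.single 2 (φ k) 1)
  have hx : ∀ i, Tendsto (fun k => x k i) atTop (𝓝 0) := fun i =>
    (tendsto_dual_single_cofinite_zero ((evalCLM 𝕜 _ 1 i).comp s)).comp
      (Nat.cofinite_eq_atTop ▸ hφ.tendsto_atTop)
  obtain ⟨K, hK⟩ := exists_nat_gt ((2 * ‖s‖ / c) ^ 2)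
  obtain ⟨S, hS, hSx⟩ := exists_card_eq_sum_norm_sub_le_norm_sum hx (half_pos hc) K
  set u := ∑ k ∈ S, lp.single (E := fun _ : ℕ => 𝕜) 2 (φ k) 1 with hu_def
  have hu : ‖u‖ ^ 2 = K := by
    rw [hu_def, ← Finset.sum_image (f := fun i => lp.single (E := fun _ : ℕ => 𝕜) 2 i 1)
      hφ.injective.injOn, norm_sum_single_one_sq,
      Finset.card_image_of_injective _ hφ.injective, hS]
  have hlow : K * (c / 2) ≤ ‖s‖ * ‖u‖ :=
    calc K * (c / 2) ≤ ∑ k ∈ S, (‖x k‖ - c / 2) := by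
          rw [← hS, ← nsmul_eq_mul, ← Finset.sum_const]
          exact Finset.sum_le_sum fun k _ => by linarith [hφc k]
      _ ≤ ‖∑ k ∈ S, x k‖ := hSx
      _ = ‖s u‖ := by simp only [x, u, map_sum]
      _ ≤ ‖s‖ * ‖u‖ := s.le_opNorm u
  have hu_pos : 0 < ‖u‖ := by
    have : (0 : ℝ) < K := lt_of_le_of_lt (by positivity) hK
    nlinarith [norm_nonneg u]
  have hu_le : ‖u‖ ≤ 2 * ‖s‖ / c := by
    rw [le_div_iff₀ hc]
    nlinarith
  nlinarith [pow_le_pow_left₀ (norm_nonneg u) hu_le 2]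

theorem not_exists_rightInverse_lpOne_to_lpTwo
    (q : lp (fun _ : ℕ => 𝕜) 1 →L[𝕜] lp (fun _ : ℕ => 𝕜) 2) :
    ¬ ∃ s : lp (fun _ : ℕ => 𝕜) 2 →L[𝕜] lp (fun _ : ℕ => 𝕜) 1, ∀ y, q (s y) = y := by
  rintro ⟨s, hs⟩
  have h_one : ∀ n, 1 ≤ ‖q‖ * ‖s (lp.single 2 n 1)‖ := fun n =>
    calc (1 : ℝ) = ‖q (s (lp.single 2 n 1))‖ := by simp [hs]
      _ ≤ ‖q‖ * ‖s (lp.single 2 n 1)‖ := q.le_opNorm _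
  have h_zero := (tendsto_norm_apply_single_of_lpTwo_to_lpOne s).const_mul ‖q‖
  rw [mul_zero] at h_zero
  exact absurd (ge_of_tendsto' h_zero h_one) (by norm_num)

end Scalar

end lp

/- `TrivSqZeroExt 𝕜 X` is the unitization `X^~` of `X` with the trivial product; its norm is the
ℓ¹-norm `‖x + λ1‖ = ‖x‖ + |λ|`. -/

open TrivSqZeroExt

/-- Given a bounded linear surjection `q : ℓ¹(ℕ) → ℓ²(ℕ)`, the induced map
`α : ℓ¹(ℕ)^~ → ℓ²(ℕ)^~`, `x + λ1 ↦ q(x) + λ1`, between the unitizations of `ℓ¹(ℕ)` and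
`ℓ²(ℕ)` (both carrying the trivial product) is a continuous surjective algebra
homomorphism with `ker α = ker q`; the corresponding extension
`0 → ker α → ℓ¹(ℕ)^~ → ℓ²(ℕ)^~ → 0` is singular and splits algebraically, but it is
not admissible. -/
theorem unitization_extension_of_ellOne_onto_ellTwo
    {𝕜 : Type*} [RCLike 𝕜]
    (q : lp (fun _ : ℕ => 𝕜) 1 →L[𝕜] lp (fun _ : ℕ => 𝕜) 2)
    (hq : Function.Surjective q) :
    ∃ α : TrivSqZeroExt 𝕜 (lp (fun _ : ℕ => 𝕜) 1) →ₙₐ[𝕜]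
        TrivSqZeroExt 𝕜 (lp (fun _ : ℕ => 𝕜) 2),
      (∀ a, α a = inl a.fst + inr (q a.snd)) ∧
      Continuous α ∧
      Function.Surjective α ∧
      (∀ a, α a = 0 ↔ (a.fst = 0 ∧ q a.snd = 0)) ∧
      (∀ a b, α a = 0 → α b = 0 → a * b = 0) ∧
      (∃ ρ : TrivSqZeroExt 𝕜 (lp (fun _ : ℕ => 𝕜) 2) →ₙₐ[𝕜]
          TrivSqZeroExt 𝕜 (lp (fun _ : ℕ => 𝕜) 1), ∀ c, α (ρ c) = c) ∧
      ¬ (∃ ρ : TrivSqZeroExt 𝕜 (lp (fun _ : ℕ => 𝕜) 2) →L[𝕜]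
          TrivSqZeroExt 𝕜 (lp (fun _ : ℕ => 𝕜) 1), ∀ c, α (ρ c) = c) := by
  have hq' : Function.Surjective q.toLinearMap := hq
  obtain ⟨ρ, hρ⟩ := exists_rightInverse_map hq'
  refine ⟨(map q.toLinearMap).toNonUnitalAlgHom, map_eq_inl_add_inr _,
    continuous_map q.continuous, map_surjective hq', map_eq_zero_iff _, fun a b ha hb => ?_,
    ⟨ρ.toNonUnitalAlgHom, hρ⟩, ?_⟩
  · exact mul_eq_zero_of_fst_eq_zero ((map_eq_zero_iff _ a).1 ha).1 ((map_eq_zero_iff _ b).1 hb).1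
  · rintro ⟨ρ, hρ⟩
    exact lp.not_exists_rightInverse_lpOne_to_lpTwo q ⟨_, rightInverse_sndCLM_comp_inrCLM hρ⟩
end

section
/- Let B be a Banach algebra over 𝕂, let ψ : B → ℓ²(ℕ)^~ be a continuous algebra homomorphism, and write ψ(T) = ψ₀(T) + θ(T)1 with ψ₀(T) ∈ ℓ²(ℕ) and θ(T) ∈ 𝕂. Regard X = 𝕂 as a Banach B-bimodule via T·λ = θ(T)λ = λ·T. For U ∈ B(ℓ²(ℕ)) define Υ_U(S,T) = ⟨U(ψ₀(S)), ψ₀(T)⟩ for S, T ∈ B, where ⟨x, y⟩ = Σₙ xₙyₙ is the bilinear duality pairing on ℓ²(ℕ). Then Υ_U is a continuous bilinear map and a 2-cocycle: θ(a)Υ_U(b,c) − Υ_U(ab,c) + Υ_U(a,bc) − Υ_U(a,b)θ(c) = 0 for all a, b, c ∈ B; moreover the map U ↦ Υ_U is linear. -/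
/- Here `TrivSqZeroExt 𝕜 (lp (fun _ : ℕ => 𝕜) 2)` is the unitization `ℓ²(ℕ)^~` of
`ℓ²(ℕ)` equipped with the trivial (zero) product; for a homomorphism `ψ : B → ℓ²(ℕ)^~`
we write `ψ(T) = ψ₀(T) + θ(T)1`, where `ψ₀ T = (ψ T).snd` and `θ T = (ψ T).fst`.
The one-dimensional Banach `B`-bimodule `X = 𝕜` carries the actions
`T·λ = θ(T)λ = λ·T`. -/

variable {𝕜 : Type*} [RCLike 𝕜]
variable {B : Type*} [NonUnitalNormedRing B] [NormedSpace 𝕜 B]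
  [IsScalarTower 𝕜 B B] [SMulCommClass 𝕜 B B] [CompleteSpace B]

/-- The bilinear duality pairing `⟨x, y⟩ = ∑ₙ xₙyₙ` on `ℓ²(ℕ)`. -/
noncomputable def ellTwoPairing (x y : lp (fun _ : ℕ => 𝕜) 2) : 𝕜 :=
  ∑' n, x n * y n

/-- The 2-cocycle `Υ_U(S,T) = ⟨U(ψ₀(S)), ψ₀(T)⟩` associated with a bounded operator `U`
on `ℓ²(ℕ)`. -/
noncomputable def Upsilon (ψ : B →ₙₐ[𝕜] TrivSqZeroExt 𝕜 (lp (fun _ : ℕ => 𝕜) 2))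
    (U : lp (fun _ : ℕ => 𝕜) 2 →L[𝕜] lp (fun _ : ℕ => 𝕜) 2) (S T : B) : 𝕜 :=
  ellTwoPairing (U ((ψ S).snd)) ((ψ T).snd)

/- Because `ℓ²(ℕ)` carries the zero product, `ψ₀` is a derivation for the `θ`-actions:
`ψ₀(ab) = θ(a) ψ₀(b) + θ(b) ψ₀(a)`. Expanding `Υ_U(ab, c)` and `Υ_U(a, bc)` with this rule, the
four terms of the cocycle identity cancel. Bilinearity and continuity come from writing the
pairing as an inner product, `⟨x, y⟩ = ⟪x̄, y⟫`. -/

theorem TrivSqZeroExt.snd_mul_of_isCentralScalar {R M : Type*} [Mul R] [AddCommMagma M]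
    [SMul R M] [SMul Rᵐᵒᵖ M] [IsCentralScalar R M] (x y : TrivSqZeroExt R M) :
    (x * y).snd = x.fst • y.snd + y.fst • x.snd := by
  rw [TrivSqZeroExt.snd_mul, op_smul_eq_smul]

section ellTwoPairing

theorem ellTwoPairing_eq_inner (x y : lp (fun _ : ℕ => 𝕜) 2) :
    ellTwoPairing x y = inner 𝕜 (star x) y := by
  simp only [ellTwoPairing, lp.inner_eq_tsum, lp.coeFn_star, Pi.star_apply,
    RCLike.inner_apply, RCLike.star_def, RCLike.conj_conj]
  exact tsum_congr fun n => mul_comm _ _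

variable (x x' y y' : lp (fun _ : ℕ => 𝕜) 2) (c : 𝕜)

theorem ellTwoPairing_add_left :
    ellTwoPairing (x + x') y = ellTwoPairing x y + ellTwoPairing x' y := by
  simp only [ellTwoPairing_eq_inner, star_add, inner_add_left]

theorem ellTwoPairing_add_right :
    ellTwoPairing x (y + y') = ellTwoPairing x y + ellTwoPairing x y' := by
  simp only [ellTwoPairing_eq_inner, inner_add_right]

theorem ellTwoPairing_smul_left : ellTwoPairing (c • x) y = c * ellTwoPairing x y := by
  simp [ellTwoPairing_eq_inner, star_smul, inner_smul_left]

theorem ellTwoPairing_smul_right : ellTwoPairing x (c • y) = c * ellTwoPairing x y := by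
  simp only [ellTwoPairing_eq_inner, inner_smul_right]

theorem continuous_ellTwoPairing :
    Continuous fun p : lp (fun _ : ℕ => 𝕜) 2 × lp (fun _ : ℕ => 𝕜) 2 =>
      ellTwoPairing p.1 p.2 := by
  simp only [ellTwoPairing_eq_inner]
  exact (continuous_star.comp continuous_fst).inner continuous_snd

end ellTwoPairing

section Upsilon

variable {A : Type*} [NonUnitalNormedRing A] [NormedSpace 𝕜 A]
  (ψ : A →ₙₐ[𝕜] TrivSqZeroExt 𝕜 (lp (fun _ : ℕ => 𝕜) 2))
  (U : lp (fun _ : ℕ => 𝕜) 2 →L[𝕜] lp (fun _ : ℕ => 𝕜) 2)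

theorem isLinearMap_upsilon_left (T : A) : IsLinearMap 𝕜 fun S : A => Upsilon ψ U S T where
  map_add S S' := by
    simp only [Upsilon, map_add, TrivSqZeroExt.snd_add, ellTwoPairing_add_left]
  map_smul c S := by
    simp only [Upsilon, map_smul, TrivSqZeroExt.snd_smul, ellTwoPairing_smul_left, smul_eq_mul]

theorem isLinearMap_upsilon_right (S : A) : IsLinearMap 𝕜 fun T : A => Upsilon ψ U S T where
  map_add T T' := by
    simp only [Upsilon, map_add, TrivSqZeroExt.snd_add, ellTwoPairing_add_right]
  map_smul c T := by
    simp only [Upsilon, map_smul, TrivSqZeroExt.snd_smul, ellTwoPairing_smul_right, smul_eq_mul]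

theorem upsilon_mul_left (a b c : A) :
    Upsilon ψ U (a * b) c = (ψ a).fst * Upsilon ψ U b c + (ψ b).fst * Upsilon ψ U a c := by
  simp only [Upsilon, map_mul, TrivSqZeroExt.snd_mul_of_isCentralScalar, map_add, map_smul,
    ellTwoPairing_add_left, ellTwoPairing_smul_left]

theorem upsilon_mul_right (a b c : A) :
    Upsilon ψ U a (b * c) = (ψ b).fst * Upsilon ψ U a c + (ψ c).fst * Upsilon ψ U a b := by
  simp only [Upsilon, map_mul, TrivSqZeroExt.snd_mul_of_isCentralScalar,
    ellTwoPairing_add_right, ellTwoPairing_smul_right]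

theorem upsilon_isCocycle (a b c : A) :
    (ψ a).fst * Upsilon ψ U b c - Upsilon ψ U (a * b) c + Upsilon ψ U a (b * c)
      - Upsilon ψ U a b * (ψ c).fst = 0 := by
  rw [upsilon_mul_left, upsilon_mul_right]
  ring

theorem continuous_upsilon (hψ : Continuous ψ) :
    Continuous fun p : A × A => Upsilon ψ U p.1 p.2 := by
  have hψ₀ : Continuous fun T : A => (ψ T).snd := TrivSqZeroExt.continuous_snd.comp hψ
  exact continuous_ellTwoPairing.comp
    ((U.continuous.comp (hψ₀.comp continuous_fst)).prodMk (hψ₀.comp continuous_snd))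

theorem upsilon_add (V : lp (fun _ : ℕ => 𝕜) 2 →L[𝕜] lp (fun _ : ℕ => 𝕜) 2) (S T : A) :
    Upsilon ψ (U + V) S T = Upsilon ψ U S T + Upsilon ψ V S T :=
  ellTwoPairing_add_left _ _ _

theorem upsilon_smul (c : 𝕜) (S T : A) : Upsilon ψ (c • U) S T = c * Upsilon ψ U S T :=
  ellTwoPairing_smul_left _ _ _

end Upsilon

/-- For every `U ∈ B(ℓ²(ℕ))`, the map `Υ_U(S,T) = ⟨U(ψ₀(S)), ψ₀(T)⟩` is a continuous
bilinear map on `B × B` and is a 2-cocycle with respect to the one-dimensional Banach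
`B`-bimodule `X = 𝕜` with actions given by `θ`; moreover `U ↦ Υ_U` is linear. -/
theorem upsilon_is_continuous_bilinear_cocycle_and_linear_in_U
    (ψ : B →ₙₐ[𝕜] TrivSqZeroExt 𝕜 (lp (fun _ : ℕ => 𝕜) 2)) (hψ : Continuous ψ) :
    (∀ U, Continuous (fun p : B × B => Upsilon ψ U p.1 p.2)) ∧
    (∀ U (T : B), IsLinearMap 𝕜 (fun S : B => Upsilon ψ U S T)) ∧
    (∀ U (S : B), IsLinearMap 𝕜 (fun T : B => Upsilon ψ U S T)) ∧
    (∀ U (a b c : B),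
      (ψ a).fst * Upsilon ψ U b c - Upsilon ψ U (a * b) c + Upsilon ψ U a (b * c)
        - Upsilon ψ U a b * (ψ c).fst = 0) ∧
    (∀ U V (S T : B), Upsilon ψ (U + V) S T = Upsilon ψ U S T + Upsilon ψ V S T) ∧
    (∀ (c : 𝕜) U (S T : B), Upsilon ψ (c • U) S T = c * Upsilon ψ U S T) :=
  ⟨(continuous_upsilon ψ · hψ), isLinearMap_upsilon_left ψ, isLinearMap_upsilon_right ψ,
    upsilon_isCocycle ψ, upsilon_add ψ, fun c U => upsilon_smul ψ U c⟩
end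

section
/- Let B be a Banach algebra over 𝕂, let ψ : B → ℓ²(ℕ)^~ be a continuous surjective algebra homomorphism with a continuous algebra homomorphism right inverse ρ : ℓ²(ℕ)^~ → B, and write ψ(T) = ψ₀(T) + θ(T)1. Regard X = 𝕂 as a Banach B-bimodule via T·λ = θ(T)λ = λ·T, and for U ∈ B(ℓ²(ℕ)) let Υ_U(S,T) = ⟨U(ψ₀(S)), ψ₀(T)⟩. If there exists a bounded linear map Ω : B → 𝕂 such that Υ_U(a,b) = θ(a)Ω(b) − Ω(ab) + Ω(a)θ(b) for all a, b ∈ B (i.e. Υ_U is a 2-coboundary), then U = 0. -/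
/- Here `TrivSqZeroExt 𝕜 (lp (fun _ : ℕ => 𝕜) 2)` is the unitization `ℓ²(ℕ)^~` of
`ℓ²(ℕ)` equipped with the trivial (zero) product; for a homomorphism `ψ : B → ℓ²(ℕ)^~`
we write `ψ(T) = ψ₀(T) + θ(T)1`, where `ψ₀ T = (ψ T).snd` and `θ T = (ψ T).fst`.
The one-dimensional Banach `B`-bimodule `X = 𝕜` carries the actions
`T·λ = θ(T)λ = λ·T`. -/

variable {𝕜 : Type*} [RCLike 𝕜]
variable {B : Type*} [NonUnitalNormedRing B] [NormedSpace 𝕜 B]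
  [IsScalarTower 𝕜 B B] [SMulCommClass 𝕜 B B] [CompleteSpace B]

open TrivSqZeroExt

theorem ellTwoPairing_single_right (x : lp (fun _ : ℕ => 𝕜) 2) (n : ℕ) (c : 𝕜) :
    ellTwoPairing x (lp.single 2 n c) = x n * c := by
  rw [ellTwoPairing, tsum_eq_single n fun m hm => by simp [hm]]
  simp

theorem eq_zero_of_forall_ellTwoPairing_eq_zero {x : lp (fun _ : ℕ => 𝕜) 2}
    (h : ∀ y, ellTwoPairing x y = 0) : x = 0 := by
  ext n
  simpa [ellTwoPairing_single_right] using h (lp.single 2 n 1)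

theorem upsilon_inr_inr {A : Type*} [NonUnitalNormedRing A] [NormedSpace 𝕜 A]
    (ψ : A →ₙₐ[𝕜] TrivSqZeroExt 𝕜 (lp (fun _ : ℕ => 𝕜) 2))
    (ρ : TrivSqZeroExt 𝕜 (lp (fun _ : ℕ => 𝕜) 2) →ₙₐ[𝕜] A) (hρ : ∀ c, ψ (ρ c) = c)
    (U : lp (fun _ : ℕ => 𝕜) 2 →L[𝕜] lp (fun _ : ℕ => 𝕜) 2) (x y : lp (fun _ : ℕ => 𝕜) 2) :
    Upsilon ψ U (ρ (inr x)) (ρ (inr y)) = ellTwoPairing (U x) y := by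
  rw [Upsilon, hρ, hρ, snd_inr, snd_inr]

theorem upsilon_coboundary_implies_zero_general
    (ψ : B →ₙₐ[𝕜] TrivSqZeroExt 𝕜 (lp (fun _ : ℕ => 𝕜) 2))
    (ρ : TrivSqZeroExt 𝕜 (lp (fun _ : ℕ => 𝕜) 2) →ₙₐ[𝕜] B)
    (hρ : ∀ c, ψ (ρ c) = c)
    (U : lp (fun _ : ℕ => 𝕜) 2 →L[𝕜] lp (fun _ : ℕ => 𝕜) 2)
    (Ω : B →L[𝕜] 𝕜)
    (hcobound : ∀ a b : B,
      Upsilon ψ U a b = (ψ a).fst * Ω b - Ω (a * b) + Ω a * (ψ b).fst) :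
    U = 0 := by
  refine ContinuousLinearMap.ext fun x => eq_zero_of_forall_ellTwoPairing_eq_zero fun y => ?_
  -- `ρ (inr x) * ρ (inr y) = ρ (inr x * inr y) = 0` and `θ ∘ ρ ∘ inr = 0`.
  have h := hcobound (ρ (inr x)) (ρ (inr y))
  rwa [upsilon_inr_inr ψ ρ hρ, ← map_mul, inr_mul_inr, map_zero, map_zero, hρ, hρ, fst_inr,
    fst_inr, zero_mul, mul_zero, sub_zero, add_zero] at h

/-- Suppose `ψ : B → ℓ²(ℕ)^~` is a continuous surjective algebra homomorphism with a
right inverse `ρ` which is a continuous algebra homomorphism. If for some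
`U ∈ B(ℓ²(ℕ))` the 2-cocycle `Υ_U` is a 2-coboundary, i.e.
`Υ_U(a,b) = θ(a)Ω(b) − Ω(ab) + Ω(a)θ(b)` for some bounded linear functional `Ω`,
then `U = 0`. -/
theorem upsilon_coboundary_implies_zero
    (ψ : B →ₙₐ[𝕜] TrivSqZeroExt 𝕜 (lp (fun _ : ℕ => 𝕜) 2))
    (hψcont : Continuous ψ) (hψsurj : Function.Surjective ψ)
    (ρ : TrivSqZeroExt 𝕜 (lp (fun _ : ℕ => 𝕜) 2) →ₙₐ[𝕜] B)
    (hρcont : Continuous ρ) (hρ : ∀ c, ψ (ρ c) = c)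
    (U : lp (fun _ : ℕ => 𝕜) 2 →L[𝕜] lp (fun _ : ℕ => 𝕜) 2)
    (Ω : B →L[𝕜] 𝕜)
    (hcobound : ∀ a b : B,
      Upsilon ψ U a b = (ψ a).fst * Ω b - Ω (a * b) + Ω a * (ψ b).fst) :
    U = 0 :=
  upsilon_coboundary_implies_zero_general ψ ρ hρ U Ω hcobound
end

section
/- Let B be a Banach algebra over 𝕂 and suppose there is a continuous surjective algebra homomorphism ψ : B → ℓ²(ℕ)^~ with a continuous algebra homomorphism right inverse. Then there exist a one-dimensional Banach B-bimodule X and a linear injection from B(ℓ²(ℕ)) into the second continuous Hochschild cohomology group H²(B, X) = Z²(B, X)/N²(B, X); in particular H²(B, X) ≠ {0}. -/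
set_option synthInstance.maxHeartbeats 1000000
set_option maxHeartbeats 1000000

/- Here `TrivSqZeroExt 𝕜 (lp (fun _ : ℕ => 𝕜) 2)` is the unitization `ℓ²(ℕ)^~` of
`ℓ²(ℕ)` equipped with the trivial (zero) product. A one-dimensional Banach `B`-bimodule
`X = 𝕜` is given by a continuous character `θ : B → 𝕜` via the actions
`T·λ = θ(T)λ = λ·T`; with respect to these actions we form the second continuous
Hochschild cohomology group `H²(B, X) = Z²(B, X)/N²(B, X)`. -/

variable {𝕜 : Type*} [RCLike 𝕜]
variable {B : Type*} [NonUnitalNormedRing B] [NormedSpace 𝕜 B]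
  [IsScalarTower 𝕜 B B] [SMulCommClass 𝕜 B B] [CompleteSpace B]

/-- `Z²(B, 𝕜)`: the space of continuous 2-cocycles `Υ : B × B → 𝕜` (realised as
continuous bilinear maps `B →L[𝕜] B →L[𝕜] 𝕜`) with respect to the one-dimensional
bimodule structure on `𝕜` given by the character `θ`. -/
def twoCocycles (θ : B →ₙₐ[𝕜] 𝕜) : Submodule 𝕜 (B →L[𝕜] B →L[𝕜] 𝕜) where
  carrier := {Υ | ∀ a b c : B, θ a * Υ b c - Υ (a * b) c + Υ a (b * c) - Υ a b * θ c = 0}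
  add_mem' := by
    intro Υ₁ Υ₂ h₁ h₂
    simp only [Set.mem_setOf_eq] at *
    intro a b c
    have e₁ := h₁ a b c
    have e₂ := h₂ a b c
    simp only [ContinuousLinearMap.add_apply]
    linear_combination e₁ + e₂
  zero_mem' := by
    simp only [Set.mem_setOf_eq]
    intro a b c
    simp
  smul_mem' := by
    intro t Υ h
    simp only [Set.mem_setOf_eq] at *
    intro a b c
    have e := h a b c
    simp only [ContinuousLinearMap.smul_apply, smul_eq_mul]
    linear_combination t * e


/-- The `𝕜`-module structure on `Z²(B, 𝕜)` (made explicit to aid instance resolution). -/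
noncomputable instance instAddCommGroupTwoCocycles (θ : B →ₙₐ[𝕜] 𝕜) :
    AddCommGroup (twoCocycles θ) :=
  @Submodule.addCommGroup 𝕜 (B →L[𝕜] B →L[𝕜] 𝕜) _ _ _ (twoCocycles θ)

/-- `N²(B, 𝕜)`: the subspace of `Z²(B, 𝕜)` consisting of the 2-coboundaries
`δ¹Ω : (a, b) ↦ θ(a)Ω(b) − Ω(ab) + Ω(a)θ(b)` for bounded linear `Ω : B → 𝕜`. -/
def twoCoboundaries (θ : B →ₙₐ[𝕜] 𝕜) : Submodule 𝕜 (twoCocycles θ) where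
  carrier := {υ | ∃ Ω : B →L[𝕜] 𝕜, ∀ a b : B,
    (υ : B →L[𝕜] B →L[𝕜] 𝕜) a b = θ a * Ω b - Ω (a * b) + Ω a * θ b}
  add_mem' := by
    rintro υ₁ υ₂ ⟨Ω₁, h₁⟩ ⟨Ω₂, h₂⟩
    refine ⟨Ω₁ + Ω₂, fun a b => ?_⟩
    have e₁ := h₁ a b
    have e₂ := h₂ a b
    simp only [Submodule.coe_add, ContinuousLinearMap.add_apply] at *
    linear_combination e₁ + e₂
  zero_mem' := by
    refine ⟨0, fun a b => ?_⟩
    simp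
  smul_mem' := by
    rintro t υ ⟨Ω, h⟩
    refine ⟨t • Ω, fun a b => ?_⟩
    have e := h a b
    simp only [Submodule.coe_smul, ContinuousLinearMap.smul_apply, smul_eq_mul] at *
    linear_combination t * e

/-! Writing `ψ = (θ, σ)`, the character `θ` makes `𝕜` a one-dimensional bimodule and `σ` is a
bounded derivation into `ℓ²` with the `θ`-actions. Every continuous bilinear form `β` on `ℓ²`
then gives the 2-cocycle `(a, b) ↦ β (σ a) (σ b)`. A coboundary vanishes on every pair `(a, b)`
with `θ a = θ b = 0` and `a * b = 0`, and the splitting `ρ` provides such pairs with arbitrary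
prescribed `σ`-values, since `ℓ²` has zero product in `ℓ²^~`. Hence `β ↦ [β ∘ (σ × σ)]` is
injective, and `T ↦ ((x, y) ↦ ⟪star (T x), y⟫)` embeds `B(ℓ²)` into the bilinear forms. -/

def IsDerivationAt {A M : Type*} [NonUnitalNormedRing A] [NormedSpace 𝕜 A] [AddCommGroup M]
    [Module 𝕜 M] (θ : A →ₙₐ[𝕜] 𝕜) (σ : A → M) : Prop :=
  ∀ a b, σ (a * b) = θ a • σ b + θ b • σ a

section CupCocycle

variable {A M : Type*} [NonUnitalNormedRing A] [NormedSpace 𝕜 A]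
  [NormedAddCommGroup M] [NormedSpace 𝕜 M] {θ : A →ₙₐ[𝕜] 𝕜} {σ : A →L[𝕜] M}

theorem IsDerivationAt.bilinearComp_mem_twoCocycles (hσ : IsDerivationAt θ σ)
    (β : M →L[𝕜] M →L[𝕜] 𝕜) : β.bilinearComp σ σ ∈ twoCocycles θ := by
  intro a b c
  simp only [ContinuousLinearMap.bilinearComp_apply, hσ a b, hσ b c, map_add, map_smul,
    ContinuousLinearMap.add_apply, ContinuousLinearMap.smul_apply, smul_eq_mul]
  ring

noncomputable def IsDerivationAt.cupCocycle (hσ : IsDerivationAt θ σ) :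
    (M →L[𝕜] M →L[𝕜] 𝕜) →ₗ[𝕜] twoCocycles θ where
  toFun β := ⟨β.bilinearComp σ σ, hσ.bilinearComp_mem_twoCocycles β⟩
  map_add' _ _ := rfl
  map_smul' _ _ := rfl

theorem apply_eq_zero_of_mem_twoCoboundaries {υ : twoCocycles θ} (hυ : υ ∈ twoCoboundaries θ)
    {a b : A} (ha : θ a = 0) (hb : θ b = 0) (hab : a * b = 0) :
    (υ : A →L[𝕜] A →L[𝕜] 𝕜) a b = 0 := by
  obtain ⟨Ω, hΩ⟩ := hυ
  simp [hΩ, ha, hb, hab]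

theorem IsDerivationAt.injective_mkQ_comp_cupCocycle (hσ : IsDerivationAt θ σ)
    (hsec : ∀ x y : M, ∃ a b : A, θ a = 0 ∧ θ b = 0 ∧ a * b = 0 ∧ σ a = x ∧ σ b = y) :
    Function.Injective ((twoCoboundaries θ).mkQ ∘ₗ hσ.cupCocycle) := by
  refine (injective_iff_map_eq_zero _).mpr fun β hβ => ?_
  rw [LinearMap.comp_apply, Submodule.mkQ_apply, Submodule.Quotient.mk_eq_zero] at hβ
  ext x y
  obtain ⟨a, b, ha, hb, hab, rfl, rfl⟩ := hsec x y
  exact apply_eq_zero_of_mem_twoCoboundaries hβ ha hb hab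

end CupCocycle

section TrivSqZeroExt

variable {A M : Type*} [NonUnitalNormedRing A] [NormedSpace 𝕜 A]
  [NormedAddCommGroup M] [NormedSpace 𝕜 M] [Module 𝕜ᵐᵒᵖ M] [IsCentralScalar 𝕜 M]
  (ψ : A →ₙₐ[𝕜] TrivSqZeroExt 𝕜 M)

def fstComp : A →ₙₐ[𝕜] 𝕜 := (TrivSqZeroExt.fstHom 𝕜 𝕜 M).toNonUnitalAlgHom.comp ψ

noncomputable def sndComp (hψ : Continuous ψ) : A →L[𝕜] M :=
  (TrivSqZeroExt.sndCLM 𝕜 M).comp ⟨(ψ : A →ₗ[𝕜] TrivSqZeroExt 𝕜 M), hψ⟩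

theorem isDerivationAt_sndComp (hψ : Continuous ψ) :
    IsDerivationAt (fstComp ψ) (sndComp ψ hψ) := by
  intro a b
  show (ψ (a * b)).snd = _
  rw [map_mul, TrivSqZeroExt.snd_mul, op_smul_eq_smul]
  rfl

theorem exists_lifts_of_rightInverse (hψ : Continuous ψ) {ρ : TrivSqZeroExt 𝕜 M →ₙₐ[𝕜] A}
    (hρ : ∀ c, ψ (ρ c) = c) (x y : M) :
    ∃ a b : A, fstComp ψ a = 0 ∧ fstComp ψ b = 0 ∧ a * b = 0 ∧
      sndComp ψ hψ a = x ∧ sndComp ψ hψ b = y := by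
  refine ⟨ρ (.inr x), ρ (.inr y), ?_, ?_, ?_, ?_, ?_⟩
  · exact congrArg TrivSqZeroExt.fst (hρ _)
  · exact congrArg TrivSqZeroExt.fst (hρ _)
  · rw [← map_mul, TrivSqZeroExt.inr_mul_inr, map_zero]
  · exact congrArg TrivSqZeroExt.snd (hρ _)
  · exact congrArg TrivSqZeroExt.snd (hρ _)

end TrivSqZeroExt

instance lp.nontrivial {α : Type*} [Nonempty α] {E : α → Type*} [∀ i, NormedAddCommGroup (E i)]
    [∀ i, Nontrivial (E i)] {p : ENNReal} : Nontrivial (lp E p) := by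
  classical
  obtain ⟨i⟩ := ‹Nonempty α›
  obtain ⟨x, hx⟩ := exists_ne (0 : E i)
  refine ⟨lp.single p i x, 0, fun h => hx ?_⟩
  simpa using congrArg (fun f : lp E p => f i) h

section InnerStar

variable {E : Type*} [NormedAddCommGroup E] [InnerProductSpace 𝕜 E]
  [StarAddMonoid E] [StarModule 𝕜 E] [ContinuousStar E]

noncomputable def innerStarL : E →L[𝕜] E →L[𝕜] 𝕜 :=
  (innerSL 𝕜).comp (starL 𝕜).toContinuousLinearMap

theorem innerStarL_injective : Function.Injective (innerStarL : E →L[𝕜] E →L[𝕜] 𝕜) :=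
  fun _ _ h => (starL 𝕜).injective (innerSL_inj.mp h)

end InnerStar

theorem ContinuousLinearMap.compL_injective {E F G : Type*}
    [NormedAddCommGroup E] [NormedSpace 𝕜 E] [NormedAddCommGroup F] [NormedSpace 𝕜 F]
    [NormedAddCommGroup G] [NormedSpace 𝕜 G] {β : F →L[𝕜] G} (hβ : Function.Injective β) :
    Function.Injective (compL 𝕜 E F G β) :=
  fun _ _ => cancel_left hβ

theorem exists_linear_injection_into_second_cohomology_general
    (ψ : B →ₙₐ[𝕜] TrivSqZeroExt 𝕜 (lp (fun _ : ℕ => 𝕜) 2))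
    (hψcont : Continuous ψ)
    (hsplit : ∃ ρ : TrivSqZeroExt 𝕜 (lp (fun _ : ℕ => 𝕜) 2) →ₙₐ[𝕜] B,
      Continuous ρ ∧ ∀ c, ψ (ρ c) = c) :
    ∃ θ : B →ₙₐ[𝕜] 𝕜, Continuous θ ∧
      ∃ ι : (lp (fun _ : ℕ => 𝕜) 2 →L[𝕜] lp (fun _ : ℕ => 𝕜) 2) →ₗ[𝕜]
          (twoCocycles θ ⧸ twoCoboundaries θ),
        Function.Injective ι ∧ Nontrivial (twoCocycles θ ⧸ twoCoboundaries θ) := by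
  obtain ⟨ρ, -, hρ⟩ := hsplit
  have hσ := isDerivationAt_sndComp ψ hψcont
  let ι := (twoCoboundaries _).mkQ ∘ₗ hσ.cupCocycle ∘ₗ
    (ContinuousLinearMap.compL 𝕜 _ _ _ innerStarL).toLinearMap
  have hι : Function.Injective ι :=
    (hσ.injective_mkQ_comp_cupCocycle (exists_lifts_of_rightInverse ψ hψcont hρ)).comp
      (ContinuousLinearMap.compL_injective innerStarL_injective)
  exact ⟨fstComp ψ, TrivSqZeroExt.continuous_fst.comp hψcont, ι, hι, hι.nontrivial⟩

/-- If a Banach algebra `B` admits a continuous surjective algebra homomorphism `ψ` onto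
`ℓ²(ℕ)^~` with a right inverse which is a continuous algebra homomorphism, then there
exist a one-dimensional Banach `B`-bimodule `X` (given by a continuous character `θ`)
and a linear injection from `B(ℓ²(ℕ))` into `H²(B, X) = Z²(B, X)/N²(B, X)`;
in particular `H²(B, X) ≠ {0}`. -/
theorem exists_linear_injection_into_second_cohomology
    (ψ : B →ₙₐ[𝕜] TrivSqZeroExt 𝕜 (lp (fun _ : ℕ => 𝕜) 2))
    (hψcont : Continuous ψ) (hψsurj : Function.Surjective ψ)
    (hsplit : ∃ ρ : TrivSqZeroExt 𝕜 (lp (fun _ : ℕ => 𝕜) 2) →ₙₐ[𝕜] B,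
      Continuous ρ ∧ ∀ c, ψ (ρ c) = c) :
    ∃ θ : B →ₙₐ[𝕜] 𝕜, Continuous θ ∧
      ∃ ι : (lp (fun _ : ℕ => 𝕜) 2 →L[𝕜] lp (fun _ : ℕ => 𝕜) 2) →ₗ[𝕜]
          (twoCocycles θ ⧸ twoCoboundaries θ),
        Function.Injective ι ∧ Nontrivial (twoCocycles θ ⧸ twoCoboundaries θ) :=
  exists_linear_injection_into_second_cohomology_general ψ hψcont hsplit
end
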